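/- Fix positive integers m, n, r and a real m × n matrix G. Define f : ℝ^{n×r} → ℝ by f(P) = (1/(m·n)) · tr((G P Pᵀ − G)ᵀ (G P Pᵀ − G)). Then f is Fréchet differentiable at every P, and its derivative at P in the direction H ∈ ℝ^{n×r} is (2/(m·n)) · tr(Hᵀ (Ĝᵀ G P − 2 Gᵀ G P + Gᵀ Ĝ P)), where Ĝ = G P Pᵀ. Equivalently, the gradient of f with respect to P (in the Frobenius inner product) is (2/(m·n)) (Ĝᵀ G P − 2 Gᵀ G P + Gᵀ Ĝ P). -/

import Mathlib

open Matrix BigOperators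

attribute [local instance] Matrix.normedAddCommGroup Matrix.normedSpace

/-!
Write `E(P) = G P Pᵀ - G` for the reconstruction error, so that the objective is
`(1/(mn)) tr(Eᵀ E)`. By the product rule `E` has derivative `H ↦ G P Hᵀ + G H Pᵀ`, and
`tr(Eᵀ E)` has derivative `2 tr(Eᵀ E')`. Cyclicity of the trace moves `H` to the left of the
Frobenius pairing, `tr(Eᵀ (G P Hᵀ + G H Pᵀ)) = tr(Hᵀ (Eᵀ G P + Gᵀ E P))`, and expanding
`E = Ĝ - G` turns `Eᵀ G P + Gᵀ E P` into the stated gradient.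
-/

namespace Matrix

variable {R l m n r : Type*} [Fintype l] [Fintype m] [Fintype n] [Fintype r]

theorem trace_transpose_mul_comm [CommSemiring R] (A B : Matrix m n R) :
    trace (Aᵀ * B) = trace (Bᵀ * A) := by
  rw [← trace_transpose, transpose_mul, transpose_transpose]

theorem trace_transpose_mul_mul_mul [CommSemiring R] (E : Matrix l r R) (A : Matrix l m R)
    (H : Matrix m n R) (B : Matrix n r R) :
    trace (Eᵀ * (A * H * B)) = trace (Hᵀ * (Aᵀ * E * Bᵀ)) := by
  rw [trace_transpose_mul_comm, transpose_mul, transpose_mul, Matrix.mul_assoc, trace_mul_comm]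
  simp only [Matrix.mul_assoc]

theorem trace_transpose_mul_reconstruction_deriv [CommRing R] (G : Matrix m n R)
    (P H : Matrix n r R) :
    trace ((G * P * Pᵀ - G)ᵀ * (G * P * Hᵀ + G * H * Pᵀ)) =
      trace (Hᵀ * ((G * P * Pᵀ)ᵀ * G * P - (2 : R) • (Gᵀ * G * P) + Gᵀ * (G * P * Pᵀ) * P)) := by
  set E := G * P * Pᵀ - G
  have hgrad : Eᵀ * G * P + Gᵀ * E * P =
      (G * P * Pᵀ)ᵀ * G * P - (2 : R) • (Gᵀ * G * P) + Gᵀ * (G * P * Pᵀ) * P := by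
    simp only [E, transpose_sub, Matrix.sub_mul, Matrix.mul_sub, two_smul, Matrix.mul_assoc]
    abel
  have hP : trace (Eᵀ * (G * P * Hᵀ)) = trace (Hᵀ * (Eᵀ * G * P)) := by
    rw [← Matrix.mul_assoc, trace_mul_comm]
    simp only [Matrix.mul_assoc]
  have hH : trace (Eᵀ * (G * H * Pᵀ)) = trace (Hᵀ * (Gᵀ * E * P)) := by
    rw [trace_transpose_mul_mul_mul, transpose_transpose]
  rw [← hgrad, Matrix.mul_add, Matrix.mul_add, trace_add, trace_add, hP, hH]

end Matrix

section Calculus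

variable {𝕜 X l m n : Type*} [NontriviallyNormedField 𝕜] [CompleteSpace 𝕜]
  [NormedAddCommGroup X] [NormedSpace 𝕜 X] [Fintype l] [Fintype m] [Fintype n] {x : X}

theorem HasFDerivAt.matrix_mul {A : X → Matrix l m 𝕜} {B : X → Matrix m n 𝕜}
    {A' : X →L[𝕜] Matrix l m 𝕜} {B' : X →L[𝕜] Matrix m n 𝕜}
    (hA : HasFDerivAt A A' x) (hB : HasFDerivAt B B' x) :
    HasFDerivAt (fun y => A y * B y)
      ((mulLeftLinearMap n 𝕜 (A x)).toContinuousLinearMap ∘L B' +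
        (mulRightLinearMap l 𝕜 (B x)).toContinuousLinearMap ∘L A') x := by
  have hmul := (mulLinearMap 𝕜 : Matrix l m 𝕜 →ₗ[𝕜] Matrix m n 𝕜 →ₗ[𝕜] Matrix l n 𝕜)
    |>.toContinuousBilinearMap.hasFDerivAt_of_bilinear hA hB
  exact hmul.congr_fderiv (ContinuousLinearMap.ext fun _ => rfl)

theorem HasFDerivAt.matrix_transpose {A : X → Matrix m n 𝕜} {A' : X →L[𝕜] Matrix m n 𝕜}
    (hA : HasFDerivAt A A' x) :
    HasFDerivAt (fun y => (A y)ᵀ)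
      ((transposeLinearEquiv m n 𝕜 𝕜).toLinearMap.toContinuousLinearMap ∘L A') x :=
  (transposeLinearEquiv m n 𝕜 𝕜).toLinearMap.toContinuousLinearMap.hasFDerivAt.comp x hA

theorem HasFDerivAt.matrix_trace {A : X → Matrix n n 𝕜} {A' : X →L[𝕜] Matrix n n 𝕜}
    (hA : HasFDerivAt A A' x) :
    HasFDerivAt (fun y => trace (A y)) ((traceLinearMap n 𝕜 𝕜).toContinuousLinearMap ∘L A') x :=
  (traceLinearMap n 𝕜 𝕜).toContinuousLinearMap.hasFDerivAt.comp x hA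

theorem HasFDerivAt.trace_transpose_mul_self {E : X → Matrix m n 𝕜}
    {E' : X →L[𝕜] Matrix m n 𝕜} (hE : HasFDerivAt E E' x) :
    HasFDerivAt (fun y => trace ((E y)ᵀ * E y))
      ((2 : 𝕜) • (traceLinearMap n 𝕜 𝕜).toContinuousLinearMap ∘L
        (mulLeftLinearMap n 𝕜 (E x)ᵀ).toContinuousLinearMap ∘L E') x := by
  refine (hE.matrix_transpose.matrix_mul hE).matrix_trace.congr_fderiv ?_
  ext1 h
  simp only [_root_.add_apply, _root_.smul_apply, ContinuousLinearMap.comp_apply,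
    LinearMap.coe_toContinuousLinearMap', mulLeftLinearMap_apply, mulRightLinearMap_apply,
    traceLinearMap_apply, LinearEquiv.coe_coe, transposeLinearEquiv_apply, AddEquiv.toEquiv_eq_coe,
    Equiv.toFun_as_coe, EquivLike.coe_coe, transposeAddEquiv_apply, smul_eq_mul]
  rw [trace_add, trace_transpose_mul_comm (E' h), two_mul]

end Calculus

theorem hasFDerivAt_mse_reconstruction_general
    {m n r : ℕ}
    (G : Matrix (Fin m) (Fin n) ℝ)
    (P : Matrix (Fin n) (Fin r) ℝ) :
    ∃ f' : Matrix (Fin n) (Fin r) ℝ →L[ℝ] ℝ,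
      HasFDerivAt
        (fun P : Matrix (Fin n) (Fin r) ℝ =>
          (1 / ((m : ℝ) * (n : ℝ))) *
            Matrix.trace ((G * P * Pᵀ - G)ᵀ * (G * P * Pᵀ - G)))
        f' P ∧
      ∀ H : Matrix (Fin n) (Fin r) ℝ,
        f' H =
          (2 / ((m : ℝ) * (n : ℝ))) *
            Matrix.trace (Hᵀ *
              ((G * P * Pᵀ)ᵀ * G * P - (2 : ℝ) • (Gᵀ * G * P) + Gᵀ * (G * P * Pᵀ) * P)) := by
  have hGP : HasFDerivAt (fun Q : Matrix (Fin n) (Fin r) ℝ => G * Q)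
      (mulLeftLinearMap (Fin r) ℝ G).toContinuousLinearMap P :=
    (mulLeftLinearMap (Fin r) ℝ G).toContinuousLinearMap.hasFDerivAt
  have hE := (hGP.matrix_mul (hasFDerivAt_id P).matrix_transpose).sub_const G
  refine ⟨_, hE.trace_transpose_mul_self.const_mul _, fun H => ?_⟩
  -- `simp` cannot see through the mismatch between the product topology and the normed one
  -- inside this derivative, so it is evaluated at `H` by unfolding.
  change 1 / ((m : ℝ) * n) * (2 * trace ((G * P * Pᵀ - G)ᵀ * (G * P * Hᵀ + G * H * Pᵀ))) = _
  rw [trace_transpose_mul_reconstruction_deriv]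
  ring

/-- The reconstruction term `f(P) = MSE(G P Pᵀ, G) = (1/(m n)) tr((G P Pᵀ − G)ᵀ (G P Pᵀ − G))`
is Fréchet differentiable at every `P`, with derivative in the direction `H` equal to
`(2/(m n)) tr(Hᵀ (Ĝᵀ G P − 2 Gᵀ G P + Gᵀ Ĝ P))` where `Ĝ = G P Pᵀ`; equivalently, its
gradient in the Frobenius inner product is `(2/(m n)) (Ĝᵀ G P − 2 Gᵀ G P + Gᵀ Ĝ P)`. -/
theorem hasFDerivAt_mse_reconstruction
    {m n r : ℕ} (hm : 0 < m) (hn : 0 < n)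
    (G : Matrix (Fin m) (Fin n) ℝ)
    (P : Matrix (Fin n) (Fin r) ℝ) :
    ∃ f' : Matrix (Fin n) (Fin r) ℝ →L[ℝ] ℝ,
      HasFDerivAt
        (fun P : Matrix (Fin n) (Fin r) ℝ =>
          (1 / ((m : ℝ) * (n : ℝ))) *
            Matrix.trace ((G * P * Pᵀ - G)ᵀ * (G * P * Pᵀ - G)))
        f' P ∧
      ∀ H : Matrix (Fin n) (Fin r) ℝ,
        f' H =
          (2 / ((m : ℝ) * (n : ℝ))) *
            Matrix.trace (Hᵀ *
              ((G * P * Pᵀ)ᵀ * G * P - (2 : ℝ) • (Gᵀ * G * P) + Gᵀ * (G * P * Pᵀ) * P)) :=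
  hasFDerivAt_mse_reconstruction_general G P
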